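/- arXiv:math/0606546 — 2 statements merged into one kernel-verified Lean document; each statement's English description precedes it below -/
import Mathlib

section
/- Let n be even and let σ be a permutation of Z_n mapping each coset of the subgroup Z_2 = {0, n/2} into itself. Then σ preserves quasi-independence: E ⊆ Z_n is quasi-independent (as a subset of the n-th roots of unity) if and only if σ(E) is. -/
def QuasiIndep (S : Set ℂ) : Prop :=
  ∀ (s : Finset ℂ) (ε : ℂ → ℤ), ↑s ⊆ S →
    (∀ z ∈ s, ε z = 0 ∨ ε z = 1 ∨ ε z = -1) →
    (∑ z ∈ s, (ε z : ℂ) * z) = 0 → ∀ z ∈ s, ε z = 0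

noncomputable def zeta (n : ℕ) (k : ZMod n) : ℂ :=
  Complex.exp (2 * Real.pi * Complex.I * k.val / n)

/-!
Under `k ↦ e^{2πik/n}`, translation by `n/2` is multiplication by `-1`, so `σ` only changes the
signs of the points of `zeta n '' E`. Quasi-independence is blind to such sign changes: a relation
`∑ εⱼ zⱼ = 0` with `εⱼ ∈ {0, ±1}` becomes `∑ (±εⱼ)(±zⱼ) = 0`, whose coefficients are again in
`{0, ±1}` and vanish exactly where the `εⱼ` do.
-/

open Set

section QuasiIndep

variable {α : Type*} {A : Set α} {φ ψ : α → ℂ}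

theorem quasiIndep_image_iff (hφ : InjOn φ A) :
    QuasiIndep (φ '' A) ↔ ∀ (t : Finset α) (η : α → ℤ), ↑t ⊆ A →
      (∀ a ∈ t, η a = 0 ∨ η a = 1 ∨ η a = -1) →
      ∑ a ∈ t, (η a : ℂ) * φ a = 0 → ∀ a ∈ t, η a = 0 := by
  classical
  constructor
  · intro h t η htA hη hsum a ha
    have : Nonempty α := ⟨a⟩
    have hinv : ∀ b ∈ t, Function.invFunOn φ A (φ b) = b := fun b hb ↦
      hφ.leftInvOn_invFunOn (htA hb)
    have key := h (t.image φ) (η ∘ Function.invFunOn φ A) (by simpa using image_mono htA)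
      (Finset.forall_mem_image.mpr fun b hb ↦ by simpa [hinv b hb] using hη b hb)
      (by rwa [Finset.sum_image (hφ.mono htA), Finset.sum_congr rfl fun b hb ↦ by
        rw [Function.comp_apply, hinv b hb]])
    simpa [hinv a ha] using key (φ a) (Finset.mem_image_of_mem φ ha)
  · intro h s ε hs hε hsum
    obtain ⟨t, htA, rfl⟩ := Finset.subset_set_image_iff.mp hs
    rw [Finset.sum_image (hφ.mono htA)] at hsum
    simpa using h t (ε ∘ φ) htA (by simpa using hε) hsum

theorem QuasiIndep.image_of_eq_or_eq_neg (hφ : InjOn φ A) (hψ : InjOn ψ A)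
    (hsign : ∀ a ∈ A, ψ a = φ a ∨ ψ a = -φ a) (h : QuasiIndep (φ '' A)) :
    QuasiIndep (ψ '' A) := by
  rw [quasiIndep_image_iff hφ] at h
  rw [quasiIndep_image_iff hψ]
  intro t η htA hη hsum a ha
  let sign : α → ℤ := fun b ↦ if ψ b = φ b then 1 else -1
  have sign_cases : ∀ b, sign b = 1 ∨ sign b = -1 := fun b ↦ by
    by_cases hb : ψ b = φ b <;> simp [sign, hb]
  have sign_mul : ∀ b ∈ A, (sign b : ℂ) * φ b = ψ b := fun b hb ↦ by
    by_cases hb' : ψ b = φ b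
    · simp [sign, hb']
    · simp only [sign, if_neg hb', (hsign b hb).resolve_left hb']
      push_cast
      ring
  have key := h t (fun b ↦ sign b * η b) htA
    (fun b hb ↦ by
      rcases sign_cases b with h | h <;> rcases hη b hb with h' | h' | h' <;> simp [h, h'])
    (by
      rw [← hsum]
      refine Finset.sum_congr rfl fun b hb ↦ ?_
      rw [← sign_mul b (htA hb)]
      push_cast
      ring)
  have : sign a ≠ 0 := by rcases sign_cases a with h | h <;> simp [h]
  simpa [this] using key a ha

theorem quasiIndep_image_iff_of_eq_or_eq_neg (hφ : InjOn φ A) (hψ : InjOn ψ A)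
    (hsign : ∀ a ∈ A, ψ a = φ a ∨ ψ a = -φ a) :
    QuasiIndep (φ '' A) ↔ QuasiIndep (ψ '' A) :=
  ⟨.image_of_eq_or_eq_neg hφ hψ hsign, .image_of_eq_or_eq_neg hψ hφ fun a ha ↦
    (hsign a ha).imp Eq.symm fun h ↦ by rw [h, neg_neg]⟩

end QuasiIndep

section zeta

variable {n : ℕ} [NeZero n]

theorem zeta_eq_stdAddChar : zeta n = ZMod.stdAddChar := by
  ext k
  rw [ZMod.stdAddChar_apply, ZMod.toCircle_apply, zeta]

theorem zeta_injective : Function.Injective (zeta n) := by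
  rw [zeta_eq_stdAddChar]
  exact ZMod.injective_stdAddChar

theorem zeta_add_half (heven : Even n) (x : ZMod n) :
    zeta n (x + ((n / 2 : ℕ) : ZMod n)) = -zeta n x := by
  obtain ⟨m, rfl⟩ := heven
  have hm : (m : ℂ) ≠ 0 := by
    have := NeZero.ne (m + m)
    exact_mod_cast (show m ≠ 0 by omega)
  have half : zeta (m + m) ((m : ℕ) : ZMod (m + m)) = -1 := by
    rw [zeta_eq_stdAddChar, ← Int.cast_natCast, ZMod.stdAddChar_coe, ← Complex.exp_pi_mul_I]
    congr 1
    push_cast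
    field_simp
    ring
  rw [show (m + m) / 2 = m by omega, zeta_eq_stdAddChar, AddChar.map_add_eq_mul,
    ← zeta_eq_stdAddChar, half, mul_neg_one]

end zeta

theorem stmt_12 (n : ℕ) (hn : 2 ≤ n) (heven : Even n) (σ : Equiv.Perm (ZMod n))
    (hσ : ∀ x : ZMod n, σ x = x ∨ σ x = x + ((n / 2 : ℕ) : ZMod n))
    (E : Set (ZMod n)) :
    QuasiIndep (zeta n '' E) ↔ QuasiIndep (zeta n '' (σ '' E)) := by
  have : NeZero n := ⟨by omega⟩
  rw [image_image]
  refine quasiIndep_image_iff_of_eq_or_eq_neg zeta_injective.injOn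
    (zeta_injective.comp σ.injective).injOn fun x _ ↦ ?_
  rcases hσ x with h | h
  · exact .inl (congrArg _ h)
  · exact .inr (by rw [h, zeta_add_half heven])
end

section
/- Monotonicity of Ψ: Let n = p₁⋯p_K with primes p₁ < ⋯ < p_K, fix s ∈ {1,…,K}, and let q be a prime with q > p_s and q ∉ {p_{s+1},…,p_K}. Let m = n/p_s. Then Ψ(qm) ≥ Ψ(n) + (q − p_s)·Ψ(m). -/
/-- `Psi N` is the maximal cardinality of a quasi-independent set of N-th roots of unity. -/
noncomputable def Psi (N : ℕ) : ℕ :=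
  sSup {k | ∃ E : Finset ℂ, (∀ z ∈ E, z ^ N = 1) ∧ QuasiIndep ↑E ∧ E.card = k}

open Finset Polynomial IntermediateField

def QuasiIndepOn {α : Type*} (f : α → ℂ) (P : Finset α) : Prop :=
  ∀ δ : α → ℤ, (∀ x ∈ P, δ x = 0 ∨ δ x = 1 ∨ δ x = -1) →
    ∑ x ∈ P, (δ x : ℂ) * f x = 0 → ∀ x ∈ P, δ x = 0

theorem quasiIndep_image_iff_s15 {α : Type*} {f : α → ℂ} {P : Finset α} (hf : Set.InjOn f P) :
    QuasiIndep ↑(P.image f) ↔ QuasiIndepOn f P := by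
  classical
  constructor
  · intro hE δ hδ hsum x hx
    have : Nonempty α := ⟨x⟩
    have hg : ∀ y ∈ P, Function.invFunOn f P (f y) = y := fun y hy => hf.leftInvOn_invFunOn hy
    have := hE (P.image f) (δ ∘ Function.invFunOn f P) subset_rfl
      (by
        intro z hz
        obtain ⟨y, hy, rfl⟩ := mem_image.mp hz
        simpa only [Function.comp_apply, hg y hy] using hδ y hy)
      (by
        rw [sum_image hf, ← hsum]
        exact sum_congr rfl fun y hy => by rw [Function.comp_apply, hg y hy])
      (f x) (mem_image_of_mem f hx)
    rwa [Function.comp_apply, hg x hx] at this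
  · intro hP s ε hs hε hsum z hz
    have hs_eq : s = (P.filter (f · ∈ s)).image f := by
      ext w
      simp only [mem_image, mem_filter]
      constructor
      · intro hw
        obtain ⟨y, hy, rfl⟩ := mem_image.mp (hs hw)
        exact ⟨y, ⟨hy, hw⟩, rfl⟩
      · rintro ⟨y, ⟨-, hy⟩, rfl⟩
        exact hy
    have hsumP : ∑ x ∈ P, ((if f x ∈ s then ε (f x) else 0 : ℤ) : ℂ) * f x = 0 := by
      rw [← hsum]
      conv_rhs => rw [hs_eq, sum_image (hf.mono fun x hx => (mem_filter.mp hx).1), sum_filter]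
      refine sum_congr rfl fun x _ => ?_
      split_ifs <;> simp
    obtain ⟨x, hx, rfl⟩ := mem_image.mp (hs hz)
    have := hP _ (fun y _ => by split_ifs with h; exacts [hε _ h, Or.inl rfl]) hsumP x hx
    rwa [if_pos hz] at this

section Psi

variable {N : ℕ}

theorem card_le_of_forall_pow_eq_one (hN : 0 < N) {E : Finset ℂ} (hE : ∀ z ∈ E, z ^ N = 1) :
    E.card ≤ N := by
  calc E.card ≤ (nthRootsFinset N (1 : ℂ)).card :=
        card_le_card fun z hz => (mem_nthRootsFinset hN 1).mpr (hE z hz)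
    _ = N := (Complex.isPrimitiveRoot_exp N hN.ne').card_nthRootsFinset

theorem bddAbove_card_quasiIndep (hN : 0 < N) :
    BddAbove {k | ∃ E : Finset ℂ, (∀ z ∈ E, z ^ N = 1) ∧ QuasiIndep ↑E ∧ E.card = k} :=
  ⟨N, fun _ ⟨_, hE, _, hk⟩ => hk ▸ card_le_of_forall_pow_eq_one hN hE⟩

theorem exists_quasiIndep_card_eq_Psi (hN : 0 < N) :
    ∃ E : Finset ℂ, (∀ z ∈ E, z ^ N = 1) ∧ QuasiIndep ↑E ∧ E.card = Psi N :=
  Nat.sSup_mem ⟨0, by exact ⟨∅, by simp, fun _ _ hs _ _ z hz => absurd (hs hz) (by simp), rfl⟩⟩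
    (bddAbove_card_quasiIndep hN)

theorem card_le_Psi (hN : 0 < N) {E : Finset ℂ} (hE : ∀ z ∈ E, z ^ N = 1)
    (hqi : QuasiIndep ↑E) : E.card ≤ Psi N :=
  le_csSup (bddAbove_card_quasiIndep hN) ⟨E, hE, hqi, rfl⟩

end Psi

section RootsOfUnity

variable {k m : ℕ}

theorem IsPrimitiveRoot.eq_and_eq_of_pow_mul_eq_pow_mul {M : Type*} [CommMonoid M] {ζ u u' : M}
    {a a' : ℕ} (hζ : IsPrimitiveRoot ζ k) (hkm : k.Coprime m) (ha : a < k) (ha' : a' < k)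
    (hu : u ^ m = 1) (hu' : u' ^ m = 1) (h : ζ ^ a * u = ζ ^ a' * u') : a = a' ∧ u = u' := by
  have hpow : (ζ ^ m) ^ a = (ζ ^ m) ^ a' := by
    simpa only [mul_pow, hu, hu', mul_one, ← pow_mul, mul_comm m] using congrArg (· ^ m) h
  obtain rfl := (hζ.pow_of_coprime m hkm.symm).pow_inj ha ha' hpow
  exact ⟨rfl, ((hζ.isUnit (by omega)).pow a).mul_left_cancel h⟩

theorem IsPrimitiveRoot.exists_pow_mul_eq {R : Type*} [CommRing R] [IsDomain R] {ζ z : R}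
    (hζ : IsPrimitiveRoot ζ k) (hkm : k.Coprime m) (hk : 0 < k) (hz : z ^ (k * m) = 1) :
    ∃ a < k, ∃ u : R, u ^ m = 1 ∧ ζ ^ a * u = z := by
  have : NeZero k := ⟨hk.ne'⟩
  have hζm := hζ.pow_of_coprime m hkm.symm
  obtain ⟨a, ha, hza⟩ := hζm.eq_pow_of_pow_eq_one (ξ := z ^ m) (by rw [← pow_mul, mul_comm, hz])
  refine ⟨a, ha, ζ ^ (k - a) * z, ?_, ?_⟩
  · rw [mul_pow, ← hza, ← pow_mul, mul_comm (k - a), pow_mul, ← pow_add, Nat.sub_add_cancel ha.le,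
      hζm.pow_eq_one]
  · rw [← mul_assoc, ← pow_add, Nat.add_sub_cancel' ha.le, hζ.pow_eq_one, one_mul]

theorem IsPrimitiveRoot.injOn_pow_mul_sigma {M : Type*} [CommMonoid M] {ζ : M}
    (hζ : IsPrimitiveRoot ζ k) (hkm : k.Coprime m) {D : ℕ → Finset M}
    (hD : ∀ a, ∀ u ∈ D a, u ^ m = 1) :
    Set.InjOn (fun x : Σ _ : ℕ, M => ζ ^ x.1 * x.2) ↑((range k).sigma D) := by
  rintro ⟨a, u⟩ hx ⟨a', u'⟩ hx' h
  simp only [coe_sigma, Set.mem_sigma_iff, coe_range, Set.mem_Iio, mem_coe] at hx hx'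
  obtain ⟨rfl, rfl⟩ := hζ.eq_and_eq_of_pow_mul_eq_pow_mul hkm hx.1 hx'.1 (hD a u hx.2)
    (hD a' u' hx'.2) h
  rfl

theorem IsPrimitiveRoot.image_sigma_eq {R : Type*} [CommRing R] [IsDomain R] [DecidableEq R]
    {ζ : R} (hζ : IsPrimitiveRoot ζ k) (hkm : k.Coprime m) (hk : 0 < k) (hm : 0 < m)
    {E : Finset R} (hE : ∀ z ∈ E, z ^ (k * m) = 1) {D : ℕ → Finset R}
    (hD : ∀ a < k, D a = (nthRootsFinset m (1 : R)).filter (ζ ^ a * · ∈ E)) :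
    ((range k).sigma D).image (fun x => ζ ^ x.1 * x.2) = E := by
  ext z
  simp only [mem_image, mem_sigma, mem_range, Sigma.exists]
  constructor
  · rintro ⟨a, u, ⟨ha, hu⟩, rfl⟩
    rw [hD a ha, mem_filter] at hu
    exact hu.2
  · intro hz
    obtain ⟨a, ha, u, hu, rfl⟩ := hζ.exists_pow_mul_eq hkm hk (hE _ hz)
    refine ⟨a, u, ⟨ha, ?_⟩, rfl⟩
    rw [hD a ha, mem_filter, Polynomial.mem_nthRootsFinset hm]
    exact ⟨hu, hz⟩

end RootsOfUnity

theorem IntermediateField.eq_of_sum_mul_pow_eq_zero {F L : Type*} [Field F] [Field L]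
    [Algebra F L] (K : IntermediateField F L) {ω : L} {q : ℕ} (hω : IsPrimitiveRoot ω q)
    (hq : 1 < q) (hdeg : q - 1 ≤ (minpoly K ω).natDegree) {c : ℕ → L} (hc : ∀ a, c a ∈ K)
    (h : ∑ a ∈ range q, c a * ω ^ a = 0) : ∀ a < q, c a = c (q - 1) := by
  have hind : LinearIndependent K fun i : Fin (q - 1) => ω ^ (i : ℕ) :=
    (linearIndependent_pow ω).comp (Fin.castLE hdeg) (Fin.castLE_injective hdeg)
  have hshift : ∑ a ∈ range (q - 1), (c a - c (q - 1)) * ω ^ a = 0 := by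
    have hall : ∑ a ∈ range q, (c a - c (q - 1)) * ω ^ a = 0 := by
      simp only [sub_mul, sum_sub_distrib, h, ← mul_sum, hω.geom_sum_eq_zero hq, mul_zero,
        sub_zero]
    rwa [← Nat.sub_add_cancel hq.le, sum_range_succ, Nat.add_sub_cancel, sub_self, zero_mul,
      add_zero] at hall
  intro a ha
  rcases lt_or_eq_of_le (Nat.le_sub_one_of_lt ha) with ha | rfl
  · have := Fintype.linearIndependent_iff.mp hind
      (fun i => ⟨c i - c (q - 1), sub_mem (hc _) (hc _)⟩)
      (by rw [← hshift, ← Fin.sum_univ_eq_sum_range (fun i => (c i - c (q - 1)) * ω ^ i)]; rfl)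
      ⟨a, ha⟩
    simpa [sub_eq_zero] using congrArg Subtype.val this
  · rfl

theorem IsPrimitiveRoot.totient_le_natDegree_minpoly_adjoin {L : Type*} [Field L] [CharZero L]
    {ω μ : L} {q m : ℕ} (hω : IsPrimitiveRoot ω q) (hμ : IsPrimitiveRoot μ m) (hq : 0 < q)
    (hm : 0 < m) (hqm : q.Coprime m) : q.totient ≤ (minpoly ℚ⟮μ⟯ ω).natDegree := by
  set K := ℚ⟮μ⟯
  have hμint : IsIntegral ℚ μ := (hμ.isIntegral hm).tower_top
  have hωint : IsIntegral K ω := (hω.isIntegral hq).tower_top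
  have : FiniteDimensional ℚ K := adjoin.finiteDimensional hμint
  have : FiniteDimensional K K⟮ω⟯ := adjoin.finiteDimensional hωint
  have : FiniteDimensional ℚ K⟮ω⟯ := FiniteDimensional.trans ℚ K K⟮ω⟯
  have : Module.Free K K⟮ω⟯ := Module.Free.of_divisionRing K K⟮ω⟯
  have htower : Module.finrank ℚ K⟮ω⟯ = m.totient * (minpoly K ω).natDegree := by
    rw [← Module.finrank_mul_finrank ℚ K K⟮ω⟯, adjoin.finrank hωint, adjoin.finrank hμint,
      ← cyclotomic_eq_minpoly_rat hμ hm, natDegree_cyclotomic]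
  have hμ' : IsPrimitiveRoot (algebraMap K K⟮ω⟯ (AdjoinSimple.gen ℚ μ)) m :=
    (hμ.of_map_of_injective (f := K.val) Subtype.val_injective).map_of_injective
      (algebraMap K K⟮ω⟯).injective
  have hω' : IsPrimitiveRoot (AdjoinSimple.gen K ω) q :=
    hω.of_map_of_injective (f := (K⟮ω⟯).val) Subtype.val_injective
  have hlcm := hμ'.lcm_totient_le_finrank hω' (cyclotomic.irreducible_rat (Nat.lcm_pos hm hq))
  rw [hqm.symm.lcm_eq_mul, Nat.totient_mul hqm.symm, htower] at hlcm
  exact Nat.le_of_mul_le_mul_left hlcm (Nat.totient_pos.mpr hm)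

theorem sum_fiber_eq_of_sum_sigma_eq_zero {q m : ℕ} {ω : ℂ} (hq : q.Prime) (hm : 0 < m)
    (hqm : q.Coprime m) (hω : IsPrimitiveRoot ω q) {D : ℕ → Finset ℂ}
    (hD : ∀ a, ∀ u ∈ D a, u ^ m = 1) {δ : (Σ _ : ℕ, ℂ) → ℤ}
    (h : ∑ x ∈ (range q).sigma D, (δ x : ℂ) * (ω ^ x.1 * x.2) = 0) :
    ∀ a < q, ∑ u ∈ D a, (δ ⟨a, u⟩ : ℂ) * u = ∑ u ∈ D (q - 1), (δ ⟨q - 1, u⟩ : ℂ) * u := by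
  have : NeZero m := ⟨hm.ne'⟩
  obtain ⟨μ, hμ⟩ : ∃ μ : ℂ, IsPrimitiveRoot μ m := ⟨_, Complex.isPrimitiveRoot_exp m hm.ne'⟩
  refine ℚ⟮μ⟯.eq_of_sum_mul_pow_eq_zero hω hq.one_lt ?_ (fun a => sum_mem fun u hu => ?_) ?_
  · simpa [Nat.totient_prime hq] using hω.totient_le_natDegree_minpoly_adjoin hμ hq.pos hm hqm
  · obtain ⟨j, -, rfl⟩ := hμ.eq_pow_of_pow_eq_one (hD a u hu)
    exact mul_mem (intCast_mem _ _) (pow_mem (mem_adjoin_simple_self ℚ μ) j)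
  · rw [← h, sum_sigma]
    exact sum_congr rfl fun a _ => by rw [sum_mul]; exact sum_congr rfl fun u _ => by ring

theorem quasiIndepOn_sigma_extend {p q m : ℕ} {η ω : ℂ} (hp : 1 < p) (hpq : p < q)
    (hq : q.Prime) (hm : 0 < m) (hqm : q.Coprime m) (hη : IsPrimitiveRoot η p)
    (hω : IsPrimitiveRoot ω q) {D : ℕ → Finset ℂ} {F : Finset ℂ}
    (hD : ∀ a, ∀ u ∈ D a, u ^ m = 1) (hDF : ∀ a, p ≤ a → D a = F)
    (hE : QuasiIndepOn (fun x : Σ _ : ℕ, ℂ => η ^ x.1 * x.2) ((range p).sigma D))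
    (hF : QuasiIndep ↑F) :
    QuasiIndepOn (fun x : Σ _ : ℕ, ℂ => ω ^ x.1 * x.2) ((range q).sigma D) := by
  intro δ hδ hsum
  set S : ℕ → ℂ := fun a => ∑ u ∈ D a, (δ ⟨a, u⟩ : ℂ) * u
  have hconst : ∀ a < q, S a = S (q - 1) :=
    sum_fiber_eq_of_sum_sigma_eq_zero hq hm hqm hω hD hsum
  have hsub : (range p).sigma D ⊆ (range q).sigma D :=
    sigma_mono (range_subset_range.mpr hpq.le) fun _ => subset_rfl
  have hEzero : ∀ x ∈ (range p).sigma D, δ x = 0 := by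
    refine hE δ (fun x hx => hδ x (hsub hx)) ?_
    calc ∑ x ∈ (range p).sigma D, (δ x : ℂ) * (η ^ x.1 * x.2)
        = ∑ a ∈ range p, S a * η ^ a := by
          rw [sum_sigma]
          exact sum_congr rfl fun a _ => by rw [sum_mul]; exact sum_congr rfl fun u _ => by ring
      _ = S (q - 1) * ∑ a ∈ range p, η ^ a := by
          rw [mul_sum]
          exact sum_congr rfl fun a ha => by rw [hconst a ((mem_range.mp ha).trans hpq)]
      _ = 0 := by rw [hη.geom_sum_eq_zero hp, mul_zero]
  have hS : S (q - 1) = 0 := by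
    rw [← hconst 0 (by omega)]
    refine sum_eq_zero fun u hu => ?_
    rw [hEzero ⟨0, u⟩ (mem_sigma.mpr ⟨mem_range.mpr (show 0 < p by omega), hu⟩)]
    simp
  rintro ⟨a, u⟩ hx
  obtain ⟨ha, hu⟩ := mem_sigma.mp hx
  by_cases hap : a < p
  · exact hEzero _ (mem_sigma.mpr ⟨mem_range.mpr hap, hu⟩)
  · have hDa : D a = F := hDF a (not_lt.mp hap)
    refine hF F (fun v => δ ⟨a, v⟩) subset_rfl
      (fun v hv => hδ _ (mem_sigma.mpr ⟨ha, hDa ▸ hv⟩)) ?_ u (hDa ▸ hu)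
    rw [← hS, ← hconst a (mem_range.mp ha)]
    simp only [S, hDa]

theorem exists_quasiIndep_card_eq_add {p q m : ℕ} (hp : p.Prime) (hq : q.Prime) (hpq : p < q)
    (hm : 0 < m) (hpm : p.Coprime m) (hqm : q.Coprime m) {E F : Finset ℂ}
    (hE : ∀ z ∈ E, z ^ (p * m) = 1) (hEqi : QuasiIndep ↑E)
    (hF : ∀ u ∈ F, u ^ m = 1) (hFqi : QuasiIndep ↑F) :
    ∃ G : Finset ℂ, (∀ w ∈ G, w ^ (q * m) = 1) ∧ QuasiIndep ↑G ∧
      G.card = E.card + (q - p) * F.card := by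
  classical
  obtain ⟨η, hη⟩ : ∃ η : ℂ, IsPrimitiveRoot η p := ⟨_, Complex.isPrimitiveRoot_exp p hp.ne_zero⟩
  obtain ⟨ω, hω⟩ : ∃ ω : ℂ, IsPrimitiveRoot ω q := ⟨_, Complex.isPrimitiveRoot_exp q hq.ne_zero⟩
  set D : ℕ → Finset ℂ := fun a =>
    if a < p then (nthRootsFinset m (1 : ℂ)).filter (η ^ a * · ∈ E) else F
  have hD : ∀ a, ∀ u ∈ D a, u ^ m = 1 := by
    intro a u hu
    by_cases hap : a < p
    · simp only [D, if_pos hap, mem_filter, mem_nthRootsFinset hm] at hu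
      exact hu.1
    · simp only [D, if_neg hap] at hu
      exact hF u hu
  have hDF : ∀ a, p ≤ a → D a = F := fun a hap => if_neg (not_lt.mpr hap)
  have hinjE := hη.injOn_pow_mul_sigma (D := D) hpm hD
  have hinjG := hω.injOn_pow_mul_sigma hqm hD
  have hEimg := hη.image_sigma_eq hpm hp.pos hm hE (D := D) fun a ha => if_pos ha
  refine ⟨((range q).sigma D).image fun x => ω ^ x.1 * x.2, ?_, ?_, ?_⟩
  · intro w hw
    obtain ⟨⟨a, u⟩, hx, rfl⟩ := mem_image.mp hw
    dsimp only
    rw [mul_pow, ← pow_mul, mul_comm a, pow_mul, pow_mul, hω.pow_eq_one, one_pow, one_pow,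
      one_mul, mul_comm q, pow_mul, hD a u (mem_sigma.mp hx).2, one_pow]
  · exact (quasiIndep_image_iff_s15 hinjG).mpr <|
      quasiIndepOn_sigma_extend hp.one_lt hpq hq hm hqm hη hω hD hDF
        ((quasiIndep_image_iff_s15 hinjE).mp (hEimg ▸ hEqi)) hFqi
  · rw [card_image_of_injOn hinjG, card_sigma, ← sum_range_add_sum_Ico _ hpq.le, ← hEimg,
      card_image_of_injOn hinjE, card_sigma, sum_congr rfl fun a ha => congrArg card
        (hDF a (mem_Ico.mp ha).1), sum_const, Nat.card_Ico, smul_eq_mul]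

theorem stmt_15_general (n p q m : ℕ) (hsf : Squarefree n)
    (hp : p.Prime) (hpn : p ∣ n) (hm : m = n / p)
    (hq : q.Prime) (hpq : p < q) (hqm : ¬ q ∣ m) :
    Psi n + (q - p) * Psi m ≤ Psi (q * m) := by
  have hn : n = p * m := by rw [hm, Nat.mul_div_cancel' hpn]
  subst hn
  have hm0 : 0 < m := Nat.pos_of_ne_zero (right_ne_zero_of_mul hsf.ne_zero)
  obtain ⟨E, hE, hEqi, hEcard⟩ := exists_quasiIndep_card_eq_Psi (Nat.pos_of_ne_zero hsf.ne_zero)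
  obtain ⟨F, hF, hFqi, hFcard⟩ := exists_quasiIndep_card_eq_Psi hm0
  obtain ⟨G, hG, hGqi, hGcard⟩ := exists_quasiIndep_card_eq_add hp hq hpq hm0
    (Nat.coprime_of_squarefree_mul hsf) ((Nat.Prime.coprime_iff_not_dvd hq).mpr hqm) hE hEqi hF
    hFqi
  rw [← hEcard, ← hFcard, ← hGcard]
  exact card_le_Psi (Nat.mul_pos hq.pos hm0) hG hGqi

theorem stmt_15 (n p q m : ℕ) (hn : 1 < n) (hsf : Squarefree n)
    (hp : p.Prime) (hpn : p ∣ n) (hm : m = n / p)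
    (hq : q.Prime) (hpq : p < q) (hqm : ¬ q ∣ m) :
    Psi n + (q - p) * Psi m ≤ Psi (q * m) :=
  stmt_15_general n p q m hsf hp hpn hm hq hpq hqm
end
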